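/- For all i ∈ {1,…,m}, the normal-form matrices satisfy the relations E_i^{(a,S)}·Δ_i⁻¹(E_j^{(a,S)}) + E_j^{(a,S)}·Δ_j⁻¹(E_i^{(a,S)}) = 0 and F_i^{(a,S)}·Δ_i(F_j^{(a,S)}) + F_j^{(a,S)}·Δ_j(F_i^{(a,S)}) = 0 for all i, j ∈ {1,…,m}, and E_i^{(a,S)}·Δ_i⁻¹(F_i^{(a,S)}) + F_i^{(a,S)}·Δ_i(E_i^{(a,S)}) = h_i·I₂ for all i ∈ {1,…,m}. -/
import Mathlib


open MvPolynomial

/-- The shift automorphism of `ℂ[h₁,…]` sending `h_i ↦ h_i + c i`. -/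
noncomputable def shiftAut {ι : Type*} (c : ι → ℂ) :
    MvPolynomial ι ℂ ≃ₐ[ℂ] MvPolynomial ι ℂ :=
  AlgEquiv.ofAlgHom
    (aeval fun i => X i + C (c i))
    (aeval fun i => X i - C (c i))
    (by ext i : 1; simp)
    (by ext i : 1; simp)

/-- The automorphism `σ_i` of `ℂ[h₁,…,h_m]` with `σ_i(h_i) = h_i - 1`, `σ_i(h_j) = h_j` (j ≠ i). -/
noncomputable def sig (m : ℕ) (i : Fin m) :
    MvPolynomial (Fin m) ℂ ≃ₐ[ℂ] MvPolynomial (Fin m) ℂ :=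
  shiftAut (fun j => if j = i then (-1 : ℂ) else 0)

/-- The automorphism `Δ = σ₁∘⋯∘σ_m`, i.e. `Δ(h_i) = h_i - 1` for all `i`. -/
noncomputable def Del (m : ℕ) :
    MvPolynomial (Fin m) ℂ ≃ₐ[ℂ] MvPolynomial (Fin m) ℂ :=
  shiftAut (fun _ : Fin m => (-1 : ℂ))

/-- The automorphism `Δ_i = σ_i⁻¹ ∘ Δ`. -/
noncomputable def Deli (m : ℕ) (i : Fin m) :
    MvPolynomial (Fin m) ℂ ≃ₐ[ℂ] MvPolynomial (Fin m) ℂ :=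
  (Del m).trans (sig m i).symm

/-- Normal-form matrix `E_i^{(a,S)}`. -/
noncomputable def Emat (m : ℕ) (a : Fin m → ℂˣ) (S : Finset (Fin m)) (i : Fin m) :
    Matrix (Fin 2) (Fin 2) (MvPolynomial (Fin m) ℂ) :=
  if i ∈ S then !![0, C ((a i : ℂ)) * X i; 0, 0] else !![0, C ((a i : ℂ)); 0, 0]

/-- Normal-form matrix `F_i^{(a,S)}`. -/
noncomputable def Fmat (m : ℕ) (a : Fin m → ℂˣ) (S : Finset (Fin m)) (i : Fin m) :
    Matrix (Fin 2) (Fin 2) (MvPolynomial (Fin m) ℂ) :=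
  if i ∈ S then !![0, 0; C (((a i)⁻¹ : ℂˣ) : ℂ), 0]
  else !![0, 0; C (((a i)⁻¹ : ℂˣ) : ℂ) * X i, 0]


lemma map_fin_two {α β : Type*} (f : α → β) (a b c d : α) :
    (!![a, b; c, d]).map f = !![f a, f b; f c, f d] := by
  ext r s
  fin_cases r <;> fin_cases s <;> simp

lemma Deli_X (m : ℕ) (i : Fin m) : Deli m i (X i) = X i := by
  simp [Deli, Del, sig, shiftAut, sub_add_cancel]

lemma Deli_symm_X (m : ℕ) (i : Fin m) : (Deli m i).symm (X i) = X i := by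
  have := Deli_X m i
  exact ((Deli m i).symm_apply_eq).mpr this.symm

lemma Deli_C (m : ℕ) (i : Fin m) (c : ℂ) : Deli m i (C c) = C c := by
  simp [Deli, Del, sig, shiftAut]

lemma Deli_symm_C (m : ℕ) (i : Fin m) (c : ℂ) : (Deli m i).symm (C c) = C c := by
  exact ((Deli m i).symm_apply_eq).mpr (Deli_C m i c).symm

/-- The normal-form matrices `E_i^{(a,S)}, F_i^{(a,S)}` satisfy the `𝔰𝔩(m|1)` relations. -/
theorem stmt_11 (m : ℕ) (hm : 2 ≤ m) (a : Fin m → ℂˣ) (S : Finset (Fin m)) :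
    (∀ i j, Emat m a S i * (Emat m a S j).map ⇑(Deli m i).symm +
      Emat m a S j * (Emat m a S i).map ⇑(Deli m j).symm = 0) ∧
    (∀ i j, Fmat m a S i * (Fmat m a S j).map ⇑(Deli m i) +
      Fmat m a S j * (Fmat m a S i).map ⇑(Deli m j) = 0) ∧
    (∀ i, Emat m a S i * (Fmat m a S i).map ⇑(Deli m i).symm +
      Fmat m a S i * (Emat m a S i).map ⇑(Deli m i) =
      (X i : MvPolynomial (Fin m) ℂ) • (1 : Matrix (Fin 2) (Fin 2) (MvPolynomial (Fin m) ℂ))) := by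
  have hc : ∀ i : Fin m, (C ((a i : ℂ)) : MvPolynomial (Fin m) ℂ) * C (((a i)⁻¹ : ℂˣ) : ℂ) = 1 := by
    intro i; rw [← C_mul]; norm_cast; simp
  have hc' : ∀ i : Fin m, (C (((a i)⁻¹ : ℂˣ) : ℂ) : MvPolynomial (Fin m) ℂ) * C ((a i : ℂ)) = 1 := by
    intro i; rw [← C_mul]; norm_cast; simp
  have key : ∀ (i : Fin m) (e f : MvPolynomial (Fin m) ℂ),
      e * (Deli m i).symm f = X i → f * (Deli m i) e = X i →
      !![0, e; 0, 0] * (!![0, 0; f, 0]).map ⇑(Deli m i).symm +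
      !![0, 0; f, 0] * (!![0, e; 0, 0]).map ⇑(Deli m i) =
      (X i : MvPolynomial (Fin m) ℂ) • (1 : Matrix (Fin 2) (Fin 2) (MvPolynomial (Fin m) ℂ)) := by
    intro i e f h1 h2
    rw [map_fin_two, map_fin_two, Matrix.mul_fin_two, Matrix.mul_fin_two]
    ext r s
    fin_cases r <;> fin_cases s <;>
      simp [h1, h2, Matrix.one_apply, Matrix.smul_apply]
  have keyE : ∀ (i j : Fin m) (e e' : MvPolynomial (Fin m) ℂ),
      !![0, e; 0, 0] * (!![0, e'; 0, 0]).map ⇑(Deli m i).symm +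
      !![0, e'; 0, 0] * (!![0, e; 0, 0]).map ⇑(Deli m j).symm = 0 := by
    intro i j e e'
    rw [map_fin_two, map_fin_two, Matrix.mul_fin_two, Matrix.mul_fin_two]
    ext r s
    fin_cases r <;> fin_cases s <;> simp
  have keyF : ∀ (i j : Fin m) (f f' : MvPolynomial (Fin m) ℂ),
      !![0, 0; f, 0] * (!![0, 0; f', 0]).map ⇑(Deli m i) +
      !![0, 0; f', 0] * (!![0, 0; f, 0]).map ⇑(Deli m j) = 0 := by
    intro i j f f'
    rw [map_fin_two, map_fin_two, Matrix.mul_fin_two, Matrix.mul_fin_two]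
    ext r s
    fin_cases r <;> fin_cases s <;> simp
  refine ⟨fun i j => ?_, fun i j => ?_, fun i => ?_⟩
  · unfold Emat; split_ifs <;> apply keyE
  · unfold Fmat; split_ifs <;> apply keyF
  · unfold Emat Fmat
    have hu : (C ((a i : ℂ)) : MvPolynomial (Fin m) ℂ) * C (((a i)⁻¹ : ℂˣ) : ℂ) = 1 := by
      rw [← C_mul]; norm_cast; simp
    have hu' : (C (((a i)⁻¹ : ℂˣ) : ℂ) : MvPolynomial (Fin m) ℂ) * C ((a i : ℂ)) = 1 := by
      rw [← C_mul]; norm_cast; simp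
    split_ifs with h
    · apply key
      · rw [Deli_symm_C, mul_assoc, mul_comm (X i), ← mul_assoc, hu, one_mul]
      · rw [map_mul, Deli_C, Deli_X, ← mul_assoc, hu', one_mul]
    · apply key
      · rw [map_mul, Deli_symm_C, Deli_symm_X, ← mul_assoc, hu, one_mul]
      · rw [Deli_C, mul_assoc, mul_comm (X i), ← mul_assoc, hu', one_mul]
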